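/- For every real λ > −1 and real ρ > 0, F_λ(0,ρ) = √(πρ/2)·J_{λ+1/2}(ρ), where J_ν(ρ) = Σ_{k=0}^∞ (−1)^k (ρ/2)^{2k+ν}/(k!·Γ(k+ν+1)) is the Bessel function of the first kind of order ν. -/

import Mathlib

open Real Complex

/-- The Kummer confluent hypergeometric function M(a,b,z) = Σ (a)_k z^k/((b)_k k!). -/
noncomputable def kummerM (a b z : ℂ) : ℂ :=
  ∑' k : ℕ, (ascPochhammer ℂ k).eval a * z ^ k /
    ((ascPochhammer ℂ k).eval b * ((Nat.factorial k : ℕ) : ℂ))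

/-- The regular Coulomb wave function
F_λ(η,ρ) = A · M(λ+1−iη, 2λ+2, 2iρ), with
A = |Γ(λ+1+iη)| e^{−πη/2−iρ} (2ρ)^{λ+1} / (2Γ(2λ+2)). -/
noncomputable def coulombF (lam η ρ : ℝ) : ℂ :=
  ((‖Complex.Gamma ((lam : ℂ) + 1 + (η : ℂ) * Complex.I)‖ : ℝ) : ℂ) *
      Complex.exp (-(((Real.pi : ℝ) : ℂ) * (η : ℂ)) / 2 - (ρ : ℂ) * Complex.I) *
      (((2 * ρ : ℝ) : ℂ) ^ ((lam : ℂ) + 1)) / (2 * Complex.Gamma (2 * (lam : ℂ) + 2)) *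
    kummerM ((lam : ℂ) + 1 - (η : ℂ) * Complex.I) (2 * (lam : ℂ) + 2)
      (2 * (ρ : ℂ) * Complex.I)


/-- The Bessel function of the first kind,
J_ν(x) = Σ_{k=0}^∞ (−1)^k (x/2)^{2k+ν} / (k! Γ(k+ν+1)). -/
noncomputable def besselJ (ν x : ℝ) : ℝ :=
  ∑' k : ℕ, (-1 : ℝ) ^ k * (x / 2) ^ (2 * (k : ℝ) + ν) /
    ((Nat.factorial k : ℝ) * Real.Gamma ((k : ℝ) + ν + 1))


namespace CoulombAux

open Finset

noncomputable def pr (x : ℝ) (k : ℕ) : ℝ := (ascPochhammer ℝ k).eval x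

lemma pr_zero (x : ℝ) : pr x 0 = 1 := by simp [pr]

lemma pr_succ (x : ℝ) (k : ℕ) : pr x (k + 1) = pr x k * (x + k) := by
  simp [pr, ascPochhammer_succ_eval]

lemma pr_pos {x : ℝ} (hx : 0 < x) (k : ℕ) : 0 < pr x k := ascPochhammer_pos k x hx

lemma pr_cast (x : ℝ) (k : ℕ) :
    (ascPochhammer ℂ k).eval (x : ℂ) = ((pr x k : ℝ) : ℂ) := by
  induction k with
  | zero => simp [pr_zero]
  | succ n ih => rw [ascPochhammer_succ_eval, ih, pr_succ]; push_cast; ring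

lemma pr_le_pr {x y : ℝ} (hx : 0 < x) (hxy : x ≤ y) (k : ℕ) : pr x k ≤ pr y k := by
  induction k with
  | zero => simp [pr_zero]
  | succ n ih =>
      rw [pr_succ, pr_succ]
      have h1 : (0:ℝ) ≤ x + n := by positivity
      exact mul_le_mul ih (by linarith) h1 (le_of_lt (pr_pos (lt_of_lt_of_le hx hxy) n))

lemma pr_ge {x : ℝ} (hx : 0 < x) (k : ℕ) :
    (min x 1) ^ k * (Nat.factorial k : ℝ) ≤ pr x k := by
  have hc : 0 < min x 1 := lt_min hx one_pos
  induction k with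
  | zero => simp [pr_zero]
  | succ n ih =>
      rw [pr_succ]
      have key : min x 1 * ((n : ℝ) + 1) ≤ x + n := by
        rcases le_total x 1 with h | h
        · rw [min_eq_left h]; nlinarith [Nat.cast_nonneg (α := ℝ) n]
        · rw [min_eq_right h]; nlinarith [Nat.cast_nonneg (α := ℝ) n]
      calc (min x 1) ^ (n+1) * (Nat.factorial (n+1) : ℝ)
          = ((min x 1) ^ n * (Nat.factorial n : ℝ)) * (min x 1 * ((n:ℝ)+1)) := by
            rw [Nat.factorial_succ]; push_cast; ring
        _ ≤ pr x n * (x + n) := by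
            apply mul_le_mul ih key (by positivity) (le_of_lt (pr_pos hx n))

lemma gamma_pr {x : ℝ} (hx : 0 < x) (k : ℕ) :
    Real.Gamma (x + k) = pr x k * Real.Gamma x := by
  induction k with
  | zero => simp [pr_zero]
  | succ n ih =>
      have h1 : x + (n+1 : ℕ) = (x + n) + 1 := by push_cast; ring
      rw [h1, Real.Gamma_add_one (by positivity), ih, pr_succ]; ring

noncomputable def tc (a : ℝ) (k : ℕ) : ℝ :=
  pr a k * 2 ^ k / (pr (2*a) k * (Nat.factorial k : ℝ))

noncomputable def uc (j : ℕ) : ℝ := (-1) ^ j / (Nat.factorial j : ℝ)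

noncomputable def Sc (a : ℝ) (n : ℕ) : ℝ :=
  ∑ p ∈ Finset.HasAntidiagonal.antidiagonal n, tc a p.1 * uc p.2

lemma tc_pos {a : ℝ} (ha : 0 < a) (k : ℕ) : 0 < tc a k := by
  have := pr_pos ha k
  have := pr_pos (by linarith : (0:ℝ) < 2*a) k
  have : (0:ℝ) < (Nat.factorial k : ℝ) := by positivity
  unfold tc; positivity

lemma tc_rec {a : ℝ} (ha : 0 < a) (k : ℕ) :
    ((k:ℝ) + 1) * (2*a + k) * tc a (k+1) = 2 * (a + k) * tc a k := by
  have h1 : pr (2*a) k ≠ 0 := (pr_pos (by linarith) k).ne'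
  have h2 : (Nat.factorial k : ℝ) ≠ 0 := by positivity
  have h3 : (2*a + (k:ℝ)) ≠ 0 := by positivity
  have h4 : ((k:ℝ) + 1) ≠ 0 := by positivity
  unfold tc
  rw [pr_succ, pr_succ, Nat.factorial_succ]
  push_cast
  field_simp
  ring

lemma uc_rec (j : ℕ) : ((j:ℝ) + 1) * uc (j+1) = - uc j := by
  have h2 : (Nat.factorial j : ℝ) ≠ 0 := by positivity
  unfold uc
  rw [Nat.factorial_succ]
  push_cast
  field_simp
  ring

lemma Sc_rec {a : ℝ} (ha : 0 < a) (n : ℕ) :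
    ((n:ℝ) + 2) * (((n:ℝ) + 2) + 2*a - 1) * Sc a (n+2) = Sc a n := by
  have expand : ∀ p ∈ Finset.HasAntidiagonal.antidiagonal (n+2),
      ((n:ℝ) + 2) * (((n:ℝ) + 2) + 2*a - 1) * (tc a p.1 * uc p.2) =
        (((p.1:ℝ)) * ((p.1:ℝ) + 2*a - 1) * tc a p.1) * uc p.2
        + tc a p.1 * ((p.2:ℝ) * ((p.2:ℝ) - 1) * uc p.2)
        + (2*(p.1:ℝ) + 2*a) * tc a p.1 * ((p.2:ℝ) * uc p.2) := by
    intro p hp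
    have hp' : ((p.1:ℝ)) + (p.2:ℝ) = (n:ℝ) + 2 := by
      have h := Finset.HasAntidiagonal.mem_antidiagonal.mp hp
      exact_mod_cast congrArg (Nat.cast : ℕ → ℝ) h
    have hn : (n:ℝ) + 2 = (p.1:ℝ) + (p.2:ℝ) := hp'.symm
    rw [hn]; ring
  have hA : ∑ p ∈ Finset.HasAntidiagonal.antidiagonal (n+2),
      (((p.1:ℝ)) * ((p.1:ℝ) + 2*a - 1) * tc a p.1) * uc p.2
      = ∑ p ∈ Finset.HasAntidiagonal.antidiagonal (n+1), (2*((p.1:ℝ)+a) * tc a p.1) * uc p.2 := by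
    rw [Finset.Nat.sum_antidiagonal_succ]
    simp only [Nat.cast_zero, zero_mul, mul_zero]
    rw [zero_add]
    apply Finset.sum_congr rfl
    intro p _
    have h := tc_rec ha p.1
    push_cast
    linear_combination uc p.2 * h
  have hCD : ∑ p ∈ Finset.HasAntidiagonal.antidiagonal (n+2),
      (2*(p.1:ℝ) + 2*a) * tc a p.1 * ((p.2:ℝ) * uc p.2)
      = ∑ p ∈ Finset.HasAntidiagonal.antidiagonal (n+1), -((2*((p.1:ℝ)+a) * tc a p.1) * uc p.2) := by
    rw [Finset.Nat.sum_antidiagonal_succ']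
    simp only [Nat.cast_zero, zero_mul, mul_zero]
    rw [zero_add]
    apply Finset.sum_congr rfl
    intro p _
    have h := uc_rec p.2
    push_cast
    linear_combination (2*(p.1:ℝ) + 2*a) * tc a p.1 * h
  have hB : ∑ p ∈ Finset.HasAntidiagonal.antidiagonal (n+2),
      tc a p.1 * ((p.2:ℝ) * ((p.2:ℝ) - 1) * uc p.2)
      = Sc a n := by
    rw [Finset.Nat.sum_antidiagonal_succ']
    simp only [Nat.cast_zero, zero_mul, mul_zero, zero_add]
    rw [Finset.Nat.sum_antidiagonal_succ']
    simp only [zero_add, Nat.cast_one, sub_self, mul_zero, zero_mul]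
    unfold Sc
    apply Finset.sum_congr rfl
    intro p _
    have h1 := uc_rec (p.2+1)
    have h2 := uc_rec p.2
    push_cast at h1 h2 ⊢
    linear_combination tc a p.1 * ((p.2:ℝ)+1) * h1 - tc a p.1 * h2
  calc ((n:ℝ) + 2) * (((n:ℝ) + 2) + 2*a - 1) * Sc a (n+2)
      = ∑ p ∈ Finset.HasAntidiagonal.antidiagonal (n+2),
          ((n:ℝ) + 2) * (((n:ℝ) + 2) + 2*a - 1) * (tc a p.1 * uc p.2) := by
        unfold Sc; rw [Finset.mul_sum]
    _ = ∑ p ∈ Finset.HasAntidiagonal.antidiagonal (n+2),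
          ((((p.1:ℝ)) * ((p.1:ℝ) + 2*a - 1) * tc a p.1) * uc p.2
          + tc a p.1 * ((p.2:ℝ) * ((p.2:ℝ) - 1) * uc p.2)
          + (2*(p.1:ℝ) + 2*a) * tc a p.1 * ((p.2:ℝ) * uc p.2)) :=
        Finset.sum_congr rfl expand
    _ = Sc a n := by
        rw [Finset.sum_add_distrib, Finset.sum_add_distrib, hA, hB, hCD]
        rw [Finset.sum_neg_distrib]
        ring

lemma Sc_zero (a : ℝ) : Sc a 0 = 1 := by
  simp [Sc, tc, uc, pr_zero]

lemma Sc_one {a : ℝ} (ha : 0 < a) : Sc a 1 = 0 := by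
  have h : pr a 1 = a := by rw [pr_succ, pr_zero]; push_cast; ring
  have h2 : pr (2*a) 1 = 2*a := by rw [pr_succ, pr_zero]; push_cast; ring
  rw [Sc, Finset.Nat.sum_antidiagonal_succ]
  simp [Finset.Nat.antidiagonal_zero, tc, uc, h, h2, pr_zero]
  field_simp
  ring

lemma Sc_closed {a : ℝ} (ha : 0 < a) (m : ℕ) :
    Sc a (2*m) = (1/4 : ℝ)^m / (pr (a + 1/2) m * (Nat.factorial m : ℝ))
      ∧ Sc a (2*m+1) = 0 := by
  induction m with
  | zero => simpa [pr_zero] using ⟨Sc_zero a, Sc_one ha⟩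
  | succ m ih =>
      have heven := Sc_rec ha (2*m)
      have hodd := Sc_rec ha (2*m+1)
      have hprm : pr (a+1/2) m ≠ 0 := (pr_pos (by linarith) m).ne'
      have hfm : (Nat.factorial m : ℝ) ≠ 0 := by positivity
      have hmn : (0:ℝ) ≤ (m:ℝ) := Nat.cast_nonneg m
      constructor
      · have h2 : 2*(m+1) = 2*m+2 := by ring
        rw [h2]
        rw [ih.1] at heven
        have hcc : (((2*m:ℕ):ℝ) + 2) * ((((2*m:ℕ):ℝ) + 2) + 2*a - 1) ≠ 0 := by
          push_cast; nlinarith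
        have hSc : Sc a (2*m+2) = ((1/4:ℝ)^m / (pr (a + 1/2) m * (Nat.factorial m : ℝ))) /
            ((((2*m:ℕ):ℝ) + 2) * ((((2*m:ℕ):ℝ) + 2) + 2*a - 1)) := by
          rw [eq_div_iff hcc]; linear_combination heven
        have hfs : ((Nat.factorial (m+1) : ℕ):ℝ) = ((m:ℝ)+1) * (Nat.factorial m : ℝ) := by
          rw [Nat.factorial_succ]; push_cast; ring
        rw [hSc, pr_succ, hfs, div_div]
        have hm12 : (0:ℝ) < (a + 1/2 + (m:ℝ)) := by linarith
        have hD1 : pr (a+1/2) m * (Nat.factorial m : ℝ) *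
            ((((2*m:ℕ):ℝ) + 2) * ((((2*m:ℕ):ℝ) + 2) + 2*a - 1)) ≠ 0 :=
          mul_ne_zero (mul_ne_zero hprm hfm) hcc
        have hD2 : pr (a + 1/2) m * (a + 1/2 + (m:ℝ)) * (((m:ℝ)+1) * (Nat.factorial m : ℝ)) ≠ 0 := by
          apply mul_ne_zero (mul_ne_zero hprm hm12.ne')
          apply mul_ne_zero (by linarith) hfm
        rw [div_eq_div_iff hD1 hD2]
        push_cast
        ring
      · have h2 : 2*(m+1)+1 = (2*m+1)+2 := by ring
        rw [h2]
        rw [ih.2] at hodd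
        have hne : (((2*m+1:ℕ):ℝ) + 2) * ((((2*m+1:ℕ):ℝ) + 2) + 2*a - 1) ≠ 0 := by
          push_cast
          nlinarith
        exact (mul_eq_zero.mp hodd).resolve_left hne

lemma tc_def (a : ℝ) (k : ℕ) :
    tc a k = pr a k * 2 ^ k / (pr (2*a) k * (Nat.factorial k : ℝ)) := rfl

lemma uc_def (j : ℕ) : uc j = (-1) ^ j / (Nat.factorial j : ℝ) := rfl

lemma Sc_def (a : ℝ) (n : ℕ) :
    Sc a n = ∑ p ∈ Finset.HasAntidiagonal.antidiagonal n, tc a p.1 * uc p.2 := rfl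

lemma summable_phi {x : ℝ} (hx : 0 < x) (r : ℝ) :
    Summable (fun m : ℕ => r ^ m / (pr x m * (Nat.factorial m : ℝ))) := by
  have hc : 0 < min x 1 := lt_min hx one_pos
  apply Summable.of_norm
  apply Summable.of_nonneg_of_le (fun m => norm_nonneg _) _
    (Real.summable_pow_div_factorial (|r|/min x 1))
  intro m
  have hpr : 0 < pr x m := pr_pos hx m
  have hfm : (1:ℝ) ≤ (Nat.factorial m : ℝ) := by
    exact_mod_cast Nat.one_le_iff_ne_zero.mpr (Nat.factorial_ne_zero m)
  have hD : (0:ℝ) < pr x m * (Nat.factorial m : ℝ) := by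
    apply mul_pos hpr; positivity
  have h1 : ‖r ^ m / (pr x m * (Nat.factorial m : ℝ))‖
      = |r| ^ m / (pr x m * (Nat.factorial m : ℝ)) := by
    rw [Real.norm_eq_abs, abs_div, _root_.abs_pow, abs_of_pos hD]
  rw [h1, div_pow, div_div]
  rw [div_le_div_iff₀ hD (by positivity)]
  have hchain : (min x 1) ^ m * (Nat.factorial m : ℝ) ≤ pr x m * (Nat.factorial m : ℝ) :=
    le_trans (pr_ge hx m) (le_mul_of_one_le_right (le_of_lt hpr) hfm)
  exact mul_le_mul_of_nonneg_left hchain (pow_nonneg (abs_nonneg r) m)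

lemma summable_t {a : ℝ} (ha : 0 < a) {ρ : ℝ} (hρ : 0 < ρ) :
    Summable (fun k : ℕ => ‖((tc a k : ℝ):ℂ) * ((ρ:ℂ) * Complex.I) ^ k‖) := by
  apply Summable.of_nonneg_of_le (fun k => norm_nonneg _) _
    (Real.summable_pow_div_factorial (2*ρ))
  intro k
  have htc := tc_pos ha k
  have hnorm : ‖((tc a k : ℝ):ℂ) * ((ρ:ℂ) * Complex.I) ^ k‖ = tc a k * ρ ^ k := by
    rw [norm_mul, norm_pow, norm_mul, Complex.norm_I, mul_one,
      Complex.norm_real, Complex.norm_real, Real.norm_eq_abs, Real.norm_eq_abs,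
      abs_of_pos htc, abs_of_pos hρ]
  rw [hnorm, tc_def]
  have h1 : pr a k ≤ pr (2*a) k := pr_le_pr ha (by linarith) k
  have h2 : 0 < pr (2*a) k := pr_pos (by linarith) k
  have h3 : (0:ℝ) < (Nat.factorial k : ℝ) := by positivity
  rw [div_mul_eq_mul_div, div_le_div_iff₀ (by positivity) h3, mul_pow]
  calc pr a k * 2 ^ k * ρ ^ k * (Nat.factorial k : ℝ)
      = pr a k * (2 ^ k * ρ ^ k * (Nat.factorial k : ℝ)) := by ring
    _ ≤ pr (2*a) k * (2 ^ k * ρ ^ k * (Nat.factorial k : ℝ)) := by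
        apply mul_le_mul_of_nonneg_right h1 (by positivity)
    _ = 2 ^ k * ρ ^ k * (pr (2*a) k * (Nat.factorial k : ℝ)) := by ring

lemma summable_u (ρ : ℝ) :
    Summable (fun j : ℕ => ‖((uc j : ℝ):ℂ) * ((ρ:ℂ) * Complex.I) ^ j‖) := by
  apply Summable.of_nonneg_of_le (fun k => norm_nonneg _) _
    (Real.summable_pow_div_factorial |ρ|)
  intro j
  have h3 : (0:ℝ) < (Nat.factorial j : ℝ) := by positivity
  have h4 : |uc j| = 1 / (Nat.factorial j : ℝ) := by
    rw [uc_def, abs_div, _root_.abs_pow, abs_neg, abs_one, one_pow, abs_of_pos h3]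
  have hnorm : ‖((uc j : ℝ):ℂ) * ((ρ:ℂ) * Complex.I) ^ j‖ = |ρ| ^ j / (Nat.factorial j : ℝ) := by
    rw [norm_mul, norm_pow, norm_mul, Complex.norm_I, mul_one,
      Complex.norm_real, Complex.norm_real, Real.norm_eq_abs, Real.norm_eq_abs, h4]
    ring
  exact le_of_eq hnorm


set_option maxHeartbeats 400000 in
lemma kummer_exp {a : ℝ} (ha : 0 < a) {ρ : ℝ} (hρ : 0 < ρ) :
    kummerM ((a : ℝ) : ℂ) (((2*a : ℝ)) : ℂ) (2 * (ρ:ℂ) * Complex.I) *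
        Complex.exp (-((ρ:ℂ) * Complex.I)) =
      ((∑' m : ℕ, (-(ρ^2)/4)^m / (pr (a + 1/2) m * (Nat.factorial m : ℝ)) : ℝ) : ℂ) := by
  have hK : kummerM ((a : ℝ) : ℂ) (((2*a : ℝ)) : ℂ) (2 * (ρ:ℂ) * Complex.I)
      = ∑' k : ℕ, ((tc a k : ℝ):ℂ) * ((ρ:ℂ) * Complex.I) ^ k := by
    unfold kummerM
    apply tsum_congr; intro k
    rw [pr_cast, pr_cast]
    have hz : (2 * (ρ:ℂ) * Complex.I) ^ k = (2:ℂ)^k * ((ρ:ℂ) * Complex.I)^k := by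
      rw [mul_assoc, mul_pow]
    rw [hz, tc_def]
    push_cast
    rw [div_mul_eq_mul_div]
    congr 1
    ring
  have hE : Complex.exp (-((ρ:ℂ) * Complex.I))
      = ∑' j : ℕ, ((uc j : ℝ):ℂ) * ((ρ:ℂ) * Complex.I) ^ j := by
    rw [Complex.exp_eq_exp_ℂ, NormedSpace.exp_eq_tsum_div]
    apply tsum_congr; intro j
    rw [neg_pow, uc_def]
    push_cast
    ring
  rw [hK, hE, tsum_mul_tsum_eq_tsum_sum_antidiagonal_of_summable_norm
    (summable_t ha hρ) (summable_u ρ)]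
  have hS : ∀ n : ℕ, (∑ p ∈ Finset.HasAntidiagonal.antidiagonal n,
      (((tc a p.1 : ℝ):ℂ) * ((ρ:ℂ) * Complex.I) ^ p.1) *
      (((uc p.2 : ℝ):ℂ) * ((ρ:ℂ) * Complex.I) ^ p.2))
      = ((Sc a n : ℝ):ℂ) * ((ρ:ℂ) * Complex.I) ^ n := by
    intro n
    rw [Sc_def]
    push_cast
    rw [Finset.sum_mul]
    apply Finset.sum_congr rfl
    intro p hp
    rw [← Finset.HasAntidiagonal.mem_antidiagonal.mp hp, pow_add]
    ring
  rw [tsum_congr hS]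
  set f : ℕ → ℂ := fun n => ((Sc a n : ℝ):ℂ) * ((ρ:ℂ) * Complex.I) ^ n with hfdef
  have hfe : ∀ m : ℕ, ((Sc a (2*m) : ℝ):ℂ) * ((ρ:ℂ) * Complex.I) ^ (2*m)
      = ((((-(ρ^2)/4)^m / (pr (a + 1/2) m * (Nat.factorial m : ℝ))) : ℝ) : ℂ) := by
    intro m
    have hsq : ((ρ:ℂ) * Complex.I) ^ (2*m) = ((-(ρ^2) : ℝ):ℂ) ^ m := by
      rw [pow_mul]
      congr 1
      rw [mul_pow, Complex.I_sq]
      push_cast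
      ring
    rw [hsq, (Sc_closed ha m).1, show (-(ρ^2)/4 : ℝ) = (-1) * (ρ^2/4) by ring, mul_pow]
    push_cast
    rw [neg_pow]
    ring
  have hfo : ∀ m : ℕ, ((Sc a (2*m+1) : ℝ):ℂ) * ((ρ:ℂ) * Complex.I) ^ (2*m+1) = 0 := by
    intro m
    rw [(Sc_closed ha m).2]
    simp
  have hse : Summable (fun m : ℕ => ((Sc a (2*m) : ℝ):ℂ) * ((ρ:ℂ) * Complex.I) ^ (2*m)) := by
    apply Summable.congr _ (fun m => (hfe m).symm)
    exact Complex.summable_ofReal.mpr (summable_phi (by linarith) _)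
  have hso : Summable (fun m : ℕ => ((Sc a (2*m+1) : ℝ):ℂ) * ((ρ:ℂ) * Complex.I) ^ (2*m+1)) := by
    apply Summable.congr _ (fun m => (hfo m).symm)
    exact summable_zero
  have heo := tsum_even_add_odd (f := f) hse hso
  rw [← heo, tsum_congr hfe, tsum_congr hfo, tsum_zero, add_zero, ← Complex.ofReal_tsum]


lemma bessel_eq {lam : ℝ} (hlam : -1 < lam) {ρ : ℝ} (hρ : 0 < ρ) :
    besselJ (lam + 1/2) ρ = (ρ/2) ^ (lam + 1/2) / Real.Gamma (lam + 1 + 1/2) *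
      ∑' m : ℕ, (-(ρ^2)/4)^m / (pr (lam + 1 + 1/2) m * (Nat.factorial m : ℝ)) := by
  unfold besselJ
  rw [← tsum_mul_left]
  apply tsum_congr; intro k
  have hg : Real.Gamma ((k:ℝ) + (lam + 1/2) + 1) = pr (lam + 1 + 1/2) k * Real.Gamma (lam + 1 + 1/2) := by
    rw [show (k:ℝ) + (lam + 1/2) + 1 = (lam + 1 + 1/2) + k by ring]
    exact gamma_pr (by linarith) k
  have hr : (ρ/2) ^ (2*(k:ℝ) + (lam + 1/2)) = ((ρ/2)^2)^k * (ρ/2) ^ (lam + 1/2) := by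
    rw [Real.rpow_add (by linarith : (0:ℝ) < ρ/2),
      show 2*(k:ℝ) = ((2*k : ℕ):ℝ) by push_cast; ring, Real.rpow_natCast, pow_mul]
  have hneg : (-(ρ^2)/4 : ℝ)^k = (-1)^k * ((ρ/2)^2)^k := by
    rw [← mul_pow]
    congr 1
    ring
  rw [hg, hr, hneg]
  have h1 : pr (lam + 1 + 1/2) k ≠ 0 := (pr_pos (by linarith) k).ne'
  have h2 : (Nat.factorial k : ℝ) ≠ 0 := by positivity
  have h3 : Real.Gamma (lam + 1 + 1/2) ≠ 0 := (Real.Gamma_pos_of_pos (by linarith)).ne'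
  field_simp

lemma coeff_eq {lam : ℝ} (hlam : -1 < lam) {ρ : ℝ} (hρ : 0 < ρ) :
    Real.Gamma (lam + 1) * (2*ρ) ^ (lam + 1) / (2 * Real.Gamma (2*(lam + 1)))
      = Real.sqrt (π * ρ / 2) * ((ρ/2) ^ (lam + 1/2) / Real.Gamma (lam + 1 + 1/2)) := by
  have ha : (0:ℝ) < lam + 1 := by linarith
  have dup := Real.Gamma_mul_Gamma_add_half (lam + 1)
  have h2a : 0 < Real.Gamma (2*(lam+1)) := Real.Gamma_pos_of_pos (by linarith)
  have hah : 0 < Real.Gamma (lam + 1 + 1/2) := Real.Gamma_pos_of_pos (by linarith)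
  have hga : 0 < Real.Gamma (lam + 1) := Real.Gamma_pos_of_pos ha
  rw [← mul_div_assoc, div_eq_div_iff (by positivity) hah.ne']
  have hsq : Real.sqrt (π * ρ / 2) = Real.sqrt π * (ρ/2) ^ ((1:ℝ)/2) := by
    rw [show π * ρ / 2 = π * (ρ/2) by ring, Real.sqrt_mul Real.pi_nonneg, Real.sqrt_eq_rpow (ρ/2)]
  have hr2 : ((2*ρ:ℝ)) ^ (lam+1) = 2 ^ (lam+1) * ρ ^ (lam+1) :=
    Real.mul_rpow (by norm_num) (le_of_lt hρ)
  have hr3 : (ρ/2:ℝ) ^ (lam+1) = ρ ^ (lam+1) / 2 ^ (lam+1) :=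
    Real.div_rpow (le_of_lt hρ) (by norm_num) _
  have hr1 : (ρ/2:ℝ) ^ ((1:ℝ)/2) * (ρ/2) ^ (lam + 1/2) = ρ ^ (lam+1) / 2 ^ (lam+1) := by
    rw [← Real.rpow_add (by linarith : (0:ℝ) < ρ/2), show (1:ℝ)/2 + (lam + 1/2) = lam + 1 by ring,
      hr3]
  have hr4 : (2:ℝ) ^ (1 - 2*(lam+1)) = 2 / (2 ^ (lam+1) * 2 ^ (lam+1)) := by
    rw [show (1:ℝ) - 2*(lam+1) = 1 - (lam+1) - (lam+1) by ring, Real.rpow_sub two_pos,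
      Real.rpow_sub two_pos, Real.rpow_one, div_div]
  have h2ne : (2:ℝ) ^ (lam+1) ≠ 0 := (Real.rpow_pos_of_pos two_pos _).ne'
  calc Real.Gamma (lam + 1) * (2*ρ) ^ (lam + 1) * Real.Gamma (lam + 1 + 1/2)
      = (Real.Gamma (lam+1) * Real.Gamma (lam + 1 + 1/2)) * (2*ρ) ^ (lam + 1) := by ring
    _ = Real.Gamma (2*(lam+1)) * 2 ^ (1 - 2*(lam+1)) * Real.sqrt π * (2*ρ) ^ (lam+1) := by
        rw [dup]
    _ = Real.sqrt (π * ρ / 2) * (ρ/2) ^ (lam + 1/2) * (2 * Real.Gamma (2*(lam+1))) := by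
        rw [hsq, hr2]
        have hr1m : (ρ/2:ℝ) ^ ((1:ℝ)/2) * (ρ/2) ^ (lam + 1/2) * 2 ^ (lam+1) = ρ ^ (lam+1) := by
          rw [hr1, div_mul_cancel₀ _ h2ne]
        have hr4m : (2:ℝ) ^ (1 - 2*(lam+1)) * (2 ^ (lam+1) * 2 ^ (lam+1)) = 2 := by
          rw [← Real.rpow_add two_pos, ← Real.rpow_add two_pos,
            show (1:ℝ) - 2*(lam+1) + ((lam+1) + (lam+1)) = 1 by ring, Real.rpow_one]
        apply mul_right_cancel₀ h2ne
        linear_combination (Real.Gamma (2*(lam+1)) * Real.sqrt π * ρ ^ (lam+1)) * hr4m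
          - (2 * Real.Gamma (2*(lam+1)) * Real.sqrt π) * hr1m

end CoulombAux

/-- for λ > −1 and ρ > 0, F_λ(0,ρ) = √(πρ/2) · J_{λ+1/2}(ρ). -/
theorem coulombF_eta_zero_eq_besselJ (lam ρ : ℝ) (hlam : -1 < lam) (hρ : 0 < ρ) :
    coulombF lam 0 ρ =
      ((Real.sqrt (Real.pi * ρ / 2) * besselJ (lam + 1 / 2) ρ : ℝ) : ℂ) := by
  have ha : (0:ℝ) < lam + 1 := by linarith
  have habs : ‖Complex.Gamma ((lam : ℂ) + 1 + ((0:ℝ) : ℂ) * Complex.I)‖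
      = Real.Gamma (lam + 1) := by
    rw [show (lam : ℂ) + 1 + ((0:ℝ) : ℂ) * Complex.I = ((lam + 1 : ℝ) : ℂ) by push_cast; ring,
      Complex.Gamma_ofReal, Complex.norm_real, Real.norm_eq_abs, abs_of_pos (Real.Gamma_pos_of_pos ha)]
  have hexp : -(((Real.pi : ℝ) : ℂ) * ((0:ℝ) : ℂ)) / 2 - (ρ : ℂ) * Complex.I
      = -((ρ : ℂ) * Complex.I) := by push_cast; ring
  have harg1 : (lam : ℂ) + 1 - ((0:ℝ) : ℂ) * Complex.I = ((lam + 1 : ℝ) : ℂ) := by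
    push_cast; ring
  have hb : 2 * (lam : ℂ) + 2 = ((2 * (lam + 1) : ℝ) : ℂ) := by push_cast; ring
  have hcp : ((2 * ρ : ℝ) : ℂ) ^ ((lam : ℂ) + 1) = (((2 * ρ) ^ (lam + 1) : ℝ) : ℂ) := by
    rw [show (lam : ℂ) + 1 = ((lam + 1 : ℝ) : ℂ) by push_cast; ring]
    exact (Complex.ofReal_cpow (by linarith) (lam + 1)).symm
  unfold coulombF
  rw [habs, hexp, harg1, hb, hcp, Complex.Gamma_ofReal]
  have hre : ((Real.Gamma (lam+1) : ℝ):ℂ) * Complex.exp (-((ρ:ℂ) * Complex.I)) *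
      (((2 * ρ) ^ (lam + 1) : ℝ) : ℂ) / (2 * ((Real.Gamma (2*(lam+1)) : ℝ):ℂ)) *
      kummerM ((lam + 1 : ℝ) : ℂ) ((2*(lam+1) : ℝ) : ℂ) (2 * (ρ:ℂ) * Complex.I)
      = (((Real.Gamma (lam+1) : ℝ):ℂ) * (((2 * ρ) ^ (lam + 1) : ℝ) : ℂ) /
          (2 * ((Real.Gamma (2*(lam+1)) : ℝ):ℂ))) *
        (kummerM ((lam + 1 : ℝ) : ℂ) ((2*(lam+1) : ℝ) : ℂ) (2 * (ρ:ℂ) * Complex.I) *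
          Complex.exp (-((ρ:ℂ) * Complex.I))) := by ring
  rw [hre, CoulombAux.kummer_exp ha hρ, CoulombAux.bessel_eq hlam hρ]
  rw [show lam + 1 + 1/2 = (lam+1) + 1/2 by ring]
  calc (((Real.Gamma (lam+1) : ℝ):ℂ) * (((2 * ρ) ^ (lam + 1) : ℝ) : ℂ) /
          (2 * ((Real.Gamma (2*(lam+1)) : ℝ):ℂ))) *
        ((∑' m : ℕ, (-(ρ^2)/4)^m / (CoulombAux.pr ((lam+1) + 1/2) m * (Nat.factorial m : ℝ)) : ℝ) : ℂ)
      = (((Real.Gamma (lam+1) * (2 * ρ) ^ (lam + 1) / (2 * Real.Gamma (2*(lam+1)))) *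
          (∑' m : ℕ, (-(ρ^2)/4)^m / (CoulombAux.pr ((lam+1) + 1/2) m * (Nat.factorial m : ℝ))) : ℝ) : ℂ) := by
        push_cast
        ring
    _ = ((Real.sqrt (Real.pi * ρ / 2) * ((ρ/2) ^ (lam + 1/2) / Real.Gamma ((lam+1) + 1/2) *
          ∑' m : ℕ, (-(ρ^2)/4)^m / (CoulombAux.pr ((lam+1) + 1/2) m * (Nat.factorial m : ℝ))) : ℝ) : ℂ) := by
        rw [show Real.Gamma (lam+1) * (2 * ρ) ^ (lam + 1) / (2 * Real.Gamma (2*(lam+1)))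
            = Real.sqrt (π * ρ / 2) * ((ρ/2) ^ (lam + 1/2) / Real.Gamma ((lam+1) + 1/2)) from
            by rw [show (lam+1) + 1/2 = lam + 1 + 1/2 by ring]; exact CoulombAux.coeff_eq hlam hρ,
          mul_assoc]
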